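/- arXiv:1005.3741 — 2 statements merged into one kernel-verified Lean document; each statement's English description precedes it below -/
import Mathlib

section
/- Let T > 0 and g₂ ∈ ℝ, and let u : ℝ → ℝ be continuously differentiable and T-periodic. For λ > 0 define u_λ(x) = u(λx), which is (T/λ)-periodic. Then for every λ > 0 one has the identity H_{T/λ}(u_λ) = H_T(u) − ((λ² − 1)/(32T))·∫₀ᵀ u'(x)² dx; in particular λ ↦ H_{T/λ}(u_λ) is differentiable at λ = 1 with derivative −(1/(16T))·∫₀ᵀ u'(x)² dx, and this derivative is nonzero (indeed strictly negative) whenever u is non-constant. (Hence the variational problem for the KdV functional with variable period has no smooth non-constant real solutions.) -/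
/-!
Substituting `y = l x` turns `H_{T/l}(u_l)` into `H_T` of an integrand in which `u'²` carries an
extra factor `l²`, while the terms in `u` alone are unchanged. Hence `H_{T/l}(u_l)` is `H_T(u)`
minus `(l² - 1)/(32 T)` times the Dirichlet integral `∫₀ᵀ u'²`, a quadratic polynomial in `l`
with derivative `-(1/(16 T)) ∫₀ᵀ u'²` at `l = 1`. For non-constant `u` the continuous
`T`-periodic function `u'` is nonzero somewhere in `[0, T)`, so the Dirichlet integral is positive.
-/

/-- For `T > 0` and `g₂ ∈ ℝ`, the KdV functional
`H_T(u) = (1/T) ∫₀ᵀ (-(u'² + 2u³)/32 + (g₂/16) u) dx` on `T`-periodic functions. -/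
noncomputable def kdvFunctional (T g₂ : ℝ) (u : ℝ → ℝ) : ℝ :=
  (1 / T) * ∫ x in (0:ℝ)..T,
    (-((deriv u x) ^ 2 + 2 * (u x) ^ 3) / 32 + (g₂ / 16) * u x)

open Function intervalIntegral

theorem Function.Periodic.deriv {𝕜 F : Type*} [NontriviallyNormedField 𝕜] [NormedAddCommGroup F]
    [NormedSpace 𝕜 F] {f : 𝕜 → F} {c : 𝕜} (hf : Periodic f c) : Periodic (deriv f) c := by
  intro x
  rw [← deriv_comp_add_const, show (fun y => f (y + c)) = f from funext hf]

theorem integral_sq_deriv_pos_of_periodic {u : ℝ → ℝ} {T : ℝ} (hT : 0 < T)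
    (hu : ContDiff ℝ 1 u) (hper : Periodic u T) (hnc : ¬ ∃ c : ℝ, ∀ x : ℝ, u x = c) :
    0 < ∫ x in (0:ℝ)..T, deriv u x ^ 2 := by
  obtain ⟨x₁, hx₁⟩ : ∃ x₁, deriv u x₁ ≠ 0 := by
    by_contra! h
    exact hnc ⟨u 0, fun x => is_const_of_deriv_eq_zero (hu.differentiable one_ne_zero) h x 0⟩
  obtain ⟨x₀, hx₀, hx₀₁⟩ := hper.deriv.exists_mem_Ico₀ hT x₁
  refine integral_pos hT ((hu.continuous_deriv le_rfl).pow 2).continuousOn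
    (fun x _ => sq_nonneg _) ⟨x₀, Set.Ico_subset_Icc_self hx₀, ?_⟩
  exact sq_pos_of_ne_zero (hx₀₁ ▸ hx₁)

theorem kdvFunctional_comp_mul_left (T g₂ : ℝ) {u : ℝ → ℝ} (hu : ContDiff ℝ 1 u) {l : ℝ}
    (hl : l ≠ 0) :
    kdvFunctional (T / l) g₂ (fun x => u (l * x)) =
      kdvFunctional T g₂ u - ((l ^ 2 - 1) / (32 * T)) * ∫ x in (0:ℝ)..T, deriv u x ^ 2 := by
  set F : ℝ → ℝ := fun y => -(deriv u y ^ 2 + 2 * u y ^ 3) / 32 + (g₂ / 16) * u y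
  set G : ℝ → ℝ := fun y => -((l * deriv u y) ^ 2 + 2 * u y ^ 3) / 32 + (g₂ / 16) * u y
  have hGF : G = fun y => F y - ((l ^ 2 - 1) / 32) * deriv u y ^ 2 := by
    funext y; ring
  have hrescale :
      kdvFunctional (T / l) g₂ (fun x => u (l * x)) = (1 / T) * ∫ y in (0:ℝ)..T, G y := by
    have hderiv : deriv (fun x => u (l * x)) = fun x => l * deriv u (l * x) :=
      funext fun x => deriv_comp_mul_left l u x
    rw [kdvFunctional, hderiv, integral_comp_mul_left G hl, mul_zero, mul_div_cancel₀ T hl,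
      smul_eq_mul]
    field_simp
  have hsplit : ∫ y in (0:ℝ)..T, G y = (∫ y in (0:ℝ)..T, F y) -
      ((l ^ 2 - 1) / 32) * ∫ x in (0:ℝ)..T, deriv u x ^ 2 := by
    have hu₀ : Continuous u := hu.continuous
    have hu' : Continuous (deriv u) := hu.continuous_deriv le_rfl
    have hF : Continuous F := by fun_prop
    have hu'2 : Continuous fun y => deriv u y ^ 2 := by fun_prop
    rw [hGF]
    beta_reduce
    rw [integral_sub (hF.intervalIntegrable 0 T) ((hu'2.intervalIntegrable 0 T).const_mul _),
      integral_const_mul]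
  rw [hrescale, hsplit, kdvFunctional]
  ring

theorem hasDerivAt_kdvFunctional_comp_mul_left (T g₂ : ℝ) {u : ℝ → ℝ} (hu : ContDiff ℝ 1 u) :
    HasDerivAt (fun l : ℝ => kdvFunctional (T / l) g₂ (fun x => u (l * x)))
      (-(1 / (16 * T)) * ∫ x in (0:ℝ)..T, deriv u x ^ 2) 1 := by
  set I := ∫ x in (0:ℝ)..T, deriv u x ^ 2
  have hquadratic : HasDerivAt (fun l : ℝ => kdvFunctional T g₂ u - ((l ^ 2 - 1) / (32 * T)) * I)
      (-(1 / (16 * T)) * I) 1 := by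
    have := ((((hasDerivAt_pow 2 (1 : ℝ)).sub_const 1).div_const (32 * T)).mul_const I).const_sub
      (kdvFunctional T g₂ u)
    exact this.congr_deriv (by ring)
  refine hquadratic.congr_of_eventuallyEq ?_
  filter_upwards [eventually_ne_nhds one_ne_zero] with l hl
  exact kdvFunctional_comp_mul_left T g₂ hu hl

/-- Rescaling identity for the KdV functional with variable period: for `u` continuously
differentiable and `T`-periodic and `u_l (x) = u (l x)` (which is `T/l`-periodic),
`H_{T/l}(u_l) = H_T(u) - ((l² - 1)/(32 T)) ∫₀ᵀ u'(x)² dx` for every `l > 0`;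
in particular `l ↦ H_{T/l}(u_l)` is differentiable at `l = 1` with derivative
`-(1/(16T)) ∫₀ᵀ u'(x)² dx`, which is strictly negative whenever `u` is non-constant. -/
theorem kdv_variable_period (T g₂ : ℝ) (hT : 0 < T) (u : ℝ → ℝ)
    (hu : ContDiff ℝ 1 u) (hu_per : ∀ x, u (x + T) = u x) :
    (∀ l : ℝ, 0 < l →
        ((∀ x : ℝ, u (l * (x + T / l)) = u (l * x)) ∧
          kdvFunctional (T / l) g₂ (fun x => u (l * x)) =
            kdvFunctional T g₂ u -
              ((l ^ 2 - 1) / (32 * T)) * ∫ x in (0:ℝ)..T, (deriv u x) ^ 2)) ∧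
    HasDerivAt (fun l : ℝ => kdvFunctional (T / l) g₂ (fun x => u (l * x)))
      (-(1 / (16 * T)) * ∫ x in (0:ℝ)..T, (deriv u x) ^ 2) 1 ∧
    ((¬ ∃ c : ℝ, ∀ x : ℝ, u x = c) →
      -(1 / (16 * T)) * ∫ x in (0:ℝ)..T, (deriv u x) ^ 2 < 0) := by
  refine ⟨fun l hl => ⟨fun x => ?_, kdvFunctional_comp_mul_left T g₂ hu hl.ne'⟩,
    hasDerivAt_kdvFunctional_comp_mul_left T g₂ hu, fun hnc => ?_⟩
  · rw [mul_add, mul_div_cancel₀ T hl.ne', hu_per]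
  · have hcoeff : -(1 / (16 * T)) < 0 := neg_neg_of_pos (by positivity)
    exact mul_neg_of_neg_of_pos hcoeff (integral_sq_deriv_pos_of_periodic hT hu hu_per hnc)
end

section
/- Let T > 0 and let u : ℝ × ℝ → ℝ be smooth, with u(t, x + T) = u(t, x) for all t, x, and suppose u satisfies the KdV equation 4·∂ₜu = 6·u·∂ₓu − ∂ₓ³u. Then the function t ↦ ∫₀ᵀ ( (∂ₓu(t, x))² + 2·u(t, x)³ ) dx is constant. (Conservation of the KdV integral H₃.) -/
/-!
Writing `ρ = (∂ₓu)² + 2u³`, the chain rule gives `∂ₜρ = 2 ∂ₓu ∂ₜ∂ₓu + 6u² ∂ₜu`. Commuting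
`∂ₜ∂ₓ = ∂ₓ∂ₜ` and using the equation in the form `4 ∂ₜu = ∂ₓ(3u² - ∂ₓ²u)`, this becomes a local
conservation law `∂ₜρ = ∂ₓJ` with flux `J = 2 ∂ₓu ∂ₜu + (3u² - ∂ₓ²u)² / 4`. Differentiating under
the integral sign, `d/dt ∫₀ᵀ ρ = ∫₀ᵀ ∂ₓJ = J(t, T) - J(t, 0)`, which vanishes by periodicity.
-/

open Function Metric Set
open scoped ContDiff

variable {E : Type*} [NormedAddCommGroup E] [NormedSpace ℝ E]

noncomputable def timeDeriv (f : ℝ → ℝ → E) (t x : ℝ) : E := deriv (fun s => f s x) t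

noncomputable def spaceDeriv (f : ℝ → ℝ → E) (t x : ℝ) : E := deriv (f t) x

local notation "∂ₜ" => timeDeriv
local notation "∂ₓ" => spaceDeriv

variable {f : ℝ → ℝ → E}

theorem hasDerivAt_timeDeriv (hf : Differentiable ℝ (uncurry f)) (t x : ℝ) :
    HasDerivAt (fun s => f s x) (∂ₜ f t x) t :=
  (hf.comp (differentiable_id.prodMk (differentiable_const x)) t).hasDerivAt

theorem hasDerivAt_spaceDeriv (hf : Differentiable ℝ (uncurry f)) (t x : ℝ) :
    HasDerivAt (f t) (∂ₓ f t x) x :=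
  (hf.comp ((differentiable_const t).prodMk differentiable_id) x).hasDerivAt

theorem uncurry_timeDeriv (hf : Differentiable ℝ (uncurry f)) :
    uncurry (∂ₜ f) = fun p => fderiv ℝ (uncurry f) p (1, 0) := by
  ext ⟨t, x⟩
  exact ((hf (t, x)).hasFDerivAt.comp_hasDerivAt t
    ((hasDerivAt_id t).prodMk (hasDerivAt_const t x))).deriv

theorem uncurry_spaceDeriv (hf : Differentiable ℝ (uncurry f)) :
    uncurry (∂ₓ f) = fun p => fderiv ℝ (uncurry f) p (0, 1) := by
  ext ⟨t, x⟩
  exact ((hf (t, x)).hasFDerivAt.comp_hasDerivAt x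
    ((hasDerivAt_const x t).prodMk (hasDerivAt_id x))).deriv

theorem contDiff_uncurry_timeDeriv (hf : ContDiff ℝ ∞ (uncurry f)) :
    ContDiff ℝ ∞ (uncurry (∂ₜ f)) := by
  rw [uncurry_timeDeriv (hf.differentiable (by simp))]
  exact (hf.fderiv_right (by simp)).clm_apply contDiff_const

theorem contDiff_uncurry_spaceDeriv (hf : ContDiff ℝ ∞ (uncurry f)) :
    ContDiff ℝ ∞ (uncurry (∂ₓ f)) := by
  rw [uncurry_spaceDeriv (hf.differentiable (by simp))]
  exact (hf.fderiv_right (by simp)).clm_apply contDiff_const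

theorem fderiv_fderiv_apply_comm {F : Type*} [NormedAddCommGroup F] [NormedSpace ℝ F]
    {g : F → E} (hg : ContDiff ℝ 2 g) (v w p : F) :
    fderiv ℝ (fun q => fderiv ℝ g q v) p w = fderiv ℝ (fun q => fderiv ℝ g q w) p v := by
  have hg' : Differentiable ℝ (fderiv ℝ g) :=
    (hg.fderiv_right (m := 1) le_rfl).differentiable one_ne_zero
  rw [fderiv_clm_apply (hg' p) (differentiableAt_const v),
    fderiv_clm_apply (hg' p) (differentiableAt_const w)]
  simpa using hg.contDiffAt.isSymmSndFDerivAt (by simp) w v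

theorem timeDeriv_spaceDeriv (hf : ContDiff ℝ 2 (uncurry f)) : ∂ₜ (∂ₓ f) = ∂ₓ (∂ₜ f) := by
  have hf1 : Differentiable ℝ (uncurry f) := hf.differentiable two_ne_zero
  have hf2 (v : ℝ × ℝ) : Differentiable ℝ fun p => fderiv ℝ (uncurry f) p v :=
    ((hf.fderiv_right (m := 1) le_rfl).clm_apply contDiff_const).differentiable one_ne_zero
  have hfx : Differentiable ℝ (uncurry (∂ₓ f)) := by rw [uncurry_spaceDeriv hf1]; exact hf2 _
  have hft : Differentiable ℝ (uncurry (∂ₜ f)) := by rw [uncurry_timeDeriv hf1]; exact hf2 _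
  ext t x
  have ht := congrFun (uncurry_timeDeriv hfx) (t, x)
  have hx := congrFun (uncurry_spaceDeriv hft) (t, x)
  simp only [uncurry_apply_pair] at ht hx
  rw [ht, hx, uncurry_spaceDeriv hf1, uncurry_timeDeriv hf1]
  exact fderiv_fderiv_apply_comm hf _ _ _

theorem periodic_timeDeriv {T : ℝ} (hf : ∀ t, Periodic (f t) T) (t : ℝ) :
    Periodic (∂ₜ f t) T := fun x => by
  simp only [timeDeriv, hf _ x]

theorem periodic_spaceDeriv {T : ℝ} (hf : ∀ t, Periodic (f t) T) (t : ℝ) :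
    Periodic (∂ₓ f t) T := fun x => by
  rw [spaceDeriv, ← deriv_comp_add_const, (hf t).funext]
  rfl

theorem hasDerivAt_intervalIntegral_of_continuous_uncurry {F F' : ℝ → ℝ → E} {a b : ℝ}
    (hF : Continuous (uncurry F)) (hF' : Continuous (uncurry F'))
    (hderiv : ∀ t x, HasDerivAt (fun s => F s x) (F' t x) t) (t₀ : ℝ) :
    HasDerivAt (fun t => ∫ x in a..b, F t x) (∫ x in a..b, F' t₀ x) t₀ := by
  obtain ⟨C, hC⟩ : ∃ C, ∀ p ∈ closedBall t₀ 1 ×ˢ uIcc a b, ‖uncurry F' p‖ ≤ C :=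
    ((isCompact_closedBall t₀ 1).prod isCompact_uIcc).exists_bound_of_continuousOn
      hF'.continuousOn
  exact (intervalIntegral.hasDerivAt_integral_of_dominated_loc_of_deriv_le
    (ball_mem_nhds t₀ one_pos)
    (.of_forall fun t => (hF.uncurry_left t).aestronglyMeasurable)
    ((hF.uncurry_left t₀).intervalIntegrable a b)
    (hF'.uncurry_left t₀).aestronglyMeasurable
    (.of_forall fun x hx t ht =>
      hC (t, x) ⟨ball_subset_closedBall ht, uIoc_subset_uIcc hx⟩)
    intervalIntegrable_const
    (.of_forall fun x _ t _ => hderiv t x)).2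

theorem intervalIntegral_eq_of_timeDeriv_eq_spaceDeriv [CompleteSpace E] {ρ J : ℝ → ℝ → E}
    {T : ℝ} (hρ : Differentiable ℝ (uncurry ρ)) (hJ : Differentiable ℝ (uncurry J))
    (hρ' : Continuous (uncurry (∂ₜ ρ))) (hlaw : ∂ₜ ρ = ∂ₓ J) (hper : ∀ t, Periodic (J t) T)
    (t₁ t₂ : ℝ) : ∫ x in 0..T, ρ t₁ x = ∫ x in 0..T, ρ t₂ x := by
  have hflux (t : ℝ) : ∫ x in 0..T, ∂ₜ ρ t x = 0 := by
    rw [intervalIntegral.integral_eq_sub_of_hasDerivAt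
      (fun x _ => hlaw ▸ hasDerivAt_spaceDeriv hJ t x)
      ((hρ'.uncurry_left t).intervalIntegrable 0 T), (hper t).eq, sub_self]
  have hderiv (t : ℝ) : HasDerivAt (fun t => ∫ x in 0..T, ρ t x) 0 t :=
    hflux t ▸ hasDerivAt_intervalIntegral_of_continuous_uncurry hρ.continuous hρ'
      (hasDerivAt_timeDeriv hρ) t
  exact is_const_of_deriv_eq_zero (fun t => (hderiv t).differentiableAt)
    (fun t => (hderiv t).deriv) t₁ t₂

noncomputable def kdvDensity (u : ℝ → ℝ → ℝ) (t x : ℝ) : ℝ := ∂ₓ u t x ^ 2 + 2 * u t x ^ 3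

noncomputable def kdvFlux (u : ℝ → ℝ → ℝ) (t x : ℝ) : ℝ :=
  2 * ∂ₓ u t x * ∂ₜ u t x + (3 * u t x ^ 2 - ∂ₓ (∂ₓ u) t x) ^ 2 / 4

variable {u : ℝ → ℝ → ℝ}

theorem contDiff_uncurry_kdvDensity (hu : ContDiff ℝ ∞ (uncurry u)) :
    ContDiff ℝ ∞ (uncurry (kdvDensity u)) :=
  ((contDiff_uncurry_spaceDeriv hu).pow 2).add (contDiff_const.mul (hu.pow 3))

theorem contDiff_uncurry_kdvFlux (hu : ContDiff ℝ ∞ (uncurry u)) :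
    ContDiff ℝ ∞ (uncurry (kdvFlux u)) := by
  have hux := contDiff_uncurry_spaceDeriv hu
  exact ((contDiff_const.mul hux).mul (contDiff_uncurry_timeDeriv hu)).add
    (((contDiff_const.mul (hu.pow 2)).sub (contDiff_uncurry_spaceDeriv hux)).pow 2 |>.div_const 4)

theorem timeDeriv_kdvDensity (hu : ContDiff ℝ ∞ (uncurry u)) (t x : ℝ) :
    ∂ₜ (kdvDensity u) t x = 2 * ∂ₓ u t x * ∂ₜ (∂ₓ u) t x + 6 * u t x ^ 2 * ∂ₜ u t x := by
  have hu₀ := hasDerivAt_timeDeriv (hu.differentiable (by simp)) t x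
  have hu₁ := hasDerivAt_timeDeriv ((contDiff_uncurry_spaceDeriv hu).differentiable (by simp)) t x
  refine ((hu₁.pow 2).add ((hu₀.pow 3).const_mul 2)).deriv.trans ?_
  push_cast
  ring

theorem spaceDeriv_kdvFlux (hu : ContDiff ℝ ∞ (uncurry u)) (t x : ℝ) :
    ∂ₓ (kdvFlux u) t x = 2 * ∂ₓ (∂ₓ u) t x * ∂ₜ u t x + 2 * ∂ₓ u t x * ∂ₓ (∂ₜ u) t x +
      (3 * u t x ^ 2 - ∂ₓ (∂ₓ u) t x) * (6 * u t x * ∂ₓ u t x - ∂ₓ (∂ₓ (∂ₓ u)) t x) / 2 := by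
  have hux := contDiff_uncurry_spaceDeriv hu
  have huxx := contDiff_uncurry_spaceDeriv hux
  have hu₀ := hasDerivAt_spaceDeriv (hu.differentiable (by simp)) t x
  have hu₁ := hasDerivAt_spaceDeriv (hux.differentiable (by simp)) t x
  have hu₂ := hasDerivAt_spaceDeriv (huxx.differentiable (by simp)) t x
  have huₜ := hasDerivAt_spaceDeriv ((contDiff_uncurry_timeDeriv hu).differentiable (by simp)) t x
  refine ((((hu₁.const_mul 2).mul huₜ).add
    ((((hu₀.pow 2).const_mul 3).sub hu₂).pow 2 |>.div_const 4))).deriv.trans ?_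
  simp only [Pi.sub_apply, Pi.pow_apply]
  push_cast
  ring

theorem timeDeriv_kdvDensity_eq_spaceDeriv_kdvFlux (hu : ContDiff ℝ ∞ (uncurry u))
    (hkdv : ∀ t x, 4 * ∂ₜ u t x = 6 * u t x * ∂ₓ u t x - ∂ₓ (∂ₓ (∂ₓ u)) t x) :
    ∂ₜ (kdvDensity u) = ∂ₓ (kdvFlux u) := by
  ext t x
  rw [timeDeriv_kdvDensity hu, spaceDeriv_kdvFlux hu,
    timeDeriv_spaceDeriv (hu.of_le (WithTop.coe_le_coe.2 le_top))]
  linear_combination (3 * u t x ^ 2 - ∂ₓ (∂ₓ u) t x) / 2 * hkdv t x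

theorem periodic_kdvFlux {T : ℝ} (hper : ∀ t, Periodic (u t) T) (t : ℝ) :
    Periodic (kdvFlux u t) T := fun x => by
  simp only [kdvFlux, hper t x, periodic_spaceDeriv hper t x, periodic_timeDeriv hper t x,
    periodic_spaceDeriv (periodic_spaceDeriv hper) t x]

theorem kdv_conservation_H3_general (T : ℝ) (u : ℝ → ℝ → ℝ)
    (hu : ContDiff ℝ (⊤ : ℕ∞) (Function.uncurry u))
    (hper : ∀ t x, u t (x + T) = u t x)
    (hkdv : ∀ t x, 4 * deriv (fun s => u s x) t =
      6 * u t x * deriv (u t) x - deriv (deriv (deriv (u t))) x) :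
    ∀ t₁ t₂ : ℝ, (∫ x in (0:ℝ)..T, ((deriv (u t₁) x) ^ 2 + 2 * (u t₁ x) ^ 3)) =
      ∫ x in (0:ℝ)..T, ((deriv (u t₂) x) ^ 2 + 2 * (u t₂ x) ^ 3) :=
  intervalIntegral_eq_of_timeDeriv_eq_spaceDeriv (ρ := kdvDensity u)
    ((contDiff_uncurry_kdvDensity hu).differentiable (by simp))
    ((contDiff_uncurry_kdvFlux hu).differentiable (by simp))
    (contDiff_uncurry_timeDeriv (contDiff_uncurry_kdvDensity hu)).continuous
    (timeDeriv_kdvDensity_eq_spaceDeriv_kdvFlux hu hkdv) (periodic_kdvFlux hper)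

/-- Conservation of the KdV integral `H₃`: if `u(t,x)` is smooth, `T`-periodic in `x`,
and satisfies the KdV equation `4 ∂ₜu = 6 u ∂ₓu - ∂ₓ³u`, then
`t ↦ ∫₀ᵀ ((∂ₓu(t,x))² + 2 u(t,x)³) dx` is constant. -/
theorem kdv_conservation_H3 (T : ℝ) (hT : 0 < T) (u : ℝ → ℝ → ℝ)
    (hu : ContDiff ℝ (⊤ : ℕ∞) (Function.uncurry u))
    (hper : ∀ t x, u t (x + T) = u t x)
    (hkdv : ∀ t x, 4 * deriv (fun s => u s x) t =
      6 * u t x * deriv (u t) x - deriv (deriv (deriv (u t))) x) :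
    ∀ t₁ t₂ : ℝ, (∫ x in (0:ℝ)..T, ((deriv (u t₁) x) ^ 2 + 2 * (u t₁ x) ^ 3)) =
      ∫ x in (0:ℝ)..T, ((deriv (u t₂) x) ^ 2 + 2 * (u t₂ x) ^ 3) :=
  kdv_conservation_H3_general T u hu hper hkdv
end
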